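/- arXiv:1910.05854 — 2 statements merged into one kernel-verified Lean document; each statement's English description precedes it below -/
import Mathlib

section
/- For every t > 0, the variance function of the inverse mixed stable subordinator satisfies the exact identity Var_Y(t) = (2 t^{2α₁}/C₁²) E²_{α₁−α₂, 2α₁+1}(−C₂ t^{α₁−α₂}/C₁) − U(t)²; equivalently, ∫₀^t 2 U(t−τ) u(τ) dτ = (2 t^{2α₁}/C₁²) E²_{α₁−α₂, 2α₁+1}(−C₂ t^{α₁−α₂}/C₁). -/
open Real MeasureTheory Filter Topology

/-- Two-parameter Mittag-Leffler function `E_{a,b}(x)`. -/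
noncomputable def ML (a b x : ℝ) : ℝ :=
  ∑' k : ℕ, x ^ k / Real.Gamma ((k : ℝ) * a + b)

/-- Second-order (three-parameter, `γ = 2`) Mittag-Leffler function `E²_{a,b}(x)`. -/
noncomputable def ML2 (a b x : ℝ) : ℝ :=
  ∑' k : ℕ, ((k : ℝ) + 1) * x ^ k / Real.Gamma ((k : ℝ) * a + b)

/-- Renewal function `U(t)` of the inverse mixed stable subordinator. -/
noncomputable def Ufun (a1 a2 C1 C2 t : ℝ) : ℝ :=
  t ^ a1 / C1 * ML (a1 - a2) (a1 + 1) (-C2 * t ^ (a1 - a2) / C1)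

/-- Renewal density `u(t)` of the inverse mixed stable subordinator. -/
noncomputable def ufun (a1 a2 C1 C2 t : ℝ) : ℝ :=
  t ^ (a1 - 1) / C1 * ML (a1 - a2) a1 (-C2 * t ^ (a1 - a2) / C1)

/-- Covariance function of the inverse mixed stable subordinator. -/
noncomputable def CovY (a1 a2 C1 C2 s t : ℝ) : ℝ :=
  (∫ τ in (0:ℝ)..(min s t),
      (Ufun a1 a2 C1 C2 (s - τ) + Ufun a1 a2 C1 C2 (t - τ)) * ufun a1 a2 C1 C2 τ)
    - Ufun a1 a2 C1 C2 s * Ufun a1 a2 C1 C2 t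

/-- Variance function of the inverse mixed stable subordinator. -/
noncomputable def VarY (a1 a2 C1 C2 t : ℝ) : ℝ := CovY a1 a2 C1 C2 t t

/-- The integral `I(s,t) = ∫₀^s U(t-τ) u(τ) dτ`. -/
noncomputable def Ifun (a1 a2 C1 C2 s t : ℝ) : ℝ :=
  ∫ τ in (0:ℝ)..s, Ufun a1 a2 C1 C2 (t - τ) * ufun a1 a2 C1 C2 τ

/-- The constant `K(s)`. -/
noncomputable def Kfun (a1 a2 C1 C2 s : ℝ) : ℝ :=
  s ^ (a1 + 1) / (C1 * C2 * Real.Gamma a2) *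
    ∑' k : ℕ, ((k : ℝ) * (a1 - a2) + a1) * (-C2 * s ^ (a1 - a2) / C1) ^ k /
      Real.Gamma ((k : ℝ) * (a1 - a2) + a1 + 2)

/-- Covariance function of the mixed fractional Poisson process. -/
noncomputable def CovN (a1 a2 C1 C2 lam s t : ℝ) : ℝ :=
  lam * Ufun a1 a2 C1 C2 (min s t) + lam ^ 2 * CovY a1 a2 C1 C2 s t

/-- Variance function of the mixed fractional Poisson process. -/
noncomputable def VarN (a1 a2 C1 C2 lam t : ℝ) : ℝ :=
  lam * Ufun a1 a2 C1 C2 t + lam ^ 2 * VarY a1 a2 C1 C2 t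

/-- Correlation function of the inverse mixed stable subordinator. -/
noncomputable def CorrY (a1 a2 C1 C2 s t : ℝ) : ℝ :=
  CovY a1 a2 C1 C2 s t /
    (Real.sqrt (VarY a1 a2 C1 C2 s) * Real.sqrt (VarY a1 a2 C1 C2 t))

/-- Correlation function of the mixed fractional Poisson process. -/
noncomputable def CorrN (a1 a2 C1 C2 lam s t : ℝ) : ℝ :=
  CovN a1 a2 C1 C2 lam s t /
    (Real.sqrt (VarN a1 a2 C1 C2 lam s) * Real.sqrt (VarN a1 a2 C1 C2 lam t))

/-- Covariance function of the mixed fractional Poissonian noise. -/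
noncomputable def CovZ (a1 a2 C1 C2 lam δ s t : ℝ) : ℝ :=
  CovN a1 a2 C1 C2 lam (s + δ) (t + δ) + CovN a1 a2 C1 C2 lam s t
    - CovN a1 a2 C1 C2 lam (s + δ) t - CovN a1 a2 C1 C2 lam s (t + δ)

/-- Variance function of the mixed fractional Poissonian noise. -/
noncomputable def VarZ (a1 a2 C1 C2 lam δ t : ℝ) : ℝ := CovZ a1 a2 C1 C2 lam δ t t

/-- Correlation function of the mixed fractional Poissonian noise. -/
noncomputable def CorrZ (a1 a2 C1 C2 lam δ s t : ℝ) : ℝ :=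
  CovZ a1 a2 C1 C2 lam δ s t /
    (Real.sqrt (VarZ a1 a2 C1 C2 lam δ s) * Real.sqrt (VarZ a1 a2 C1 C2 lam δ t))

/-- Incomplete Beta function `B(a, b; x)`. -/
noncomputable def Binc (a b x : ℝ) : ℝ :=
  ∫ y in (0:ℝ)..x, y ^ (a - 1) * (1 - y) ^ (b - 1)

/-! With `a = α₁ - α₂` and `c = -C₂/C₁`, both `U(t - τ)` and `u(τ)` are Mittag-Leffler series in
`(t - τ)^a` and `τ^a`. Multiplying them out, the `(j, k)` term integrates by the Beta integral to
`cʲ⁺ᵏ t^((j+k)a + 2α₁) / (C₁² Γ((j+k)a + 2α₁ + 1))`, which depends on `j + k` only; the `n + 1`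
pairs with `j + k = n` produce the weight `n + 1` of `E²`. The same computation with `|c|` bounds
the integrals of the absolute values, which justifies integrating term by term. All these series
converge because `(y - 1)^a Γ(y) ≤ Γ(y + a)`, by log-convexity of `Γ`. -/

theorem rpow_sub_one_mul_Gamma_le_Gamma_add {a y : ℝ} (ha : 0 < a) (hy : 1 < y) :
    (y - 1) ^ a * Gamma y ≤ Gamma (y + a) := by
  have hslope := convexOn_log_Gamma.slope_mono_adjacent (x := y - 1) (y := y) (z := y + a)
    (Set.mem_Ioi.2 (by linarith)) (Set.mem_Ioi.2 (by linarith)) (by linarith) (by linarith)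
  have hΓy : Gamma y = (y - 1) * Gamma (y - 1) := by
    simpa using Gamma_add_one (s := y - 1) (by linarith)
  have hlog : log (Gamma y) - log (Gamma (y - 1)) = log (y - 1) := by
    rw [hΓy, log_mul (by linarith) (Gamma_pos_of_pos (by linarith)).ne']; ring
  simp only [Function.comp, hlog, sub_sub_cancel, div_one, add_sub_cancel_left] at hslope
  rw [le_div_iff₀ ha, mul_comm, ← log_rpow (by linarith), le_sub_iff_add_le, ← log_mul
    (rpow_pos_of_pos (by linarith) _).ne' (Gamma_pos_of_pos (by linarith)).ne'] at hslope
  exact (log_le_log_iff (by positivity) (Gamma_pos_of_pos (by linarith))).mp hslope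

theorem summable_norm_ML2_term {a : ℝ} (ha : 0 < a) (b x : ℝ) :
    Summable fun n : ℕ => ‖((n : ℝ) + 1) * x ^ n / Gamma (n * a + b)‖ := by
  have hy : Tendsto (fun n : ℕ => (n : ℝ) * a + b) atTop atTop :=
    tendsto_atTop_add_const_right _ b (tendsto_natCast_atTop_atTop.atTop_mul_const ha)
  have hpow : Tendsto (fun n : ℕ => ((n : ℝ) * a + b - 1) ^ a) atTop atTop :=
    (tendsto_rpow_atTop ha).comp (tendsto_atTop_add_const_right _ (-1) hy)
  refine summable_of_ratio_norm_eventually_le (r := 1 / 2) (by norm_num) ?_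
  filter_upwards [hy.eventually_gt_atTop 1, hpow.eventually_ge_atTop (4 * |x|)]
    with n hy1 hx
  set y := (n : ℝ) * a + b
  have hΓ : 0 < Gamma y := Gamma_pos_of_pos (by linarith)
  have hΓa : 0 < Gamma (y + a) := Gamma_pos_of_pos (by linarith)
  have hgrow : 4 * |x| * Gamma y ≤ Gamma (y + a) :=
    (mul_le_mul_of_nonneg_right hx hΓ.le).trans (rpow_sub_one_mul_Gamma_le_Gamma_add ha hy1)
  have hy' : (↑(n + 1) : ℝ) * a + b = y + a := by push_cast; ring
  simp only [hy']
  simp only [norm_div, norm_mul, norm_pow, Real.norm_eq_abs, abs_abs, abs_of_pos hΓ,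
    abs_of_pos hΓa, Nat.cast_succ, abs_of_nonneg (by positivity : (0 : ℝ) ≤ n + 1),
    abs_of_nonneg (by positivity : (0 : ℝ) ≤ n + 1 + 1)]
  rw [div_le_iff₀ hΓa, pow_succ]
  calc ((n : ℝ) + 1 + 1) * (|x| ^ n * |x|)
      ≤ 1 / 2 * (((n : ℝ) + 1) * |x| ^ n / Gamma y) * (4 * |x| * Gamma y) := by
        field_simp
        nlinarith [mul_nonneg (pow_nonneg (abs_nonneg x) n) (abs_nonneg x), n.cast_nonneg (α := ℝ)]
    _ ≤ 1 / 2 * (((n : ℝ) + 1) * |x| ^ n / Gamma y) * Gamma (y + a) := by gcongr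

theorem summable_norm_ML_term {a : ℝ} (ha : 0 < a) (b x : ℝ) :
    Summable fun n : ℕ => ‖x ^ n / Gamma (n * a + b)‖ := by
  refine (summable_norm_ML2_term ha b x).of_nonneg_of_le (fun _ => norm_nonneg _) fun n => ?_
  rw [mul_div_assoc, norm_mul]
  exact le_mul_of_one_le_left (norm_nonneg _) (by
    rw [Real.norm_of_nonneg (by positivity)]; linarith [n.cast_nonneg (α := ℝ)])

theorem integral_rpow_mul_sub_rpow {p q t : ℝ} (hp : 0 < p) (hq : 0 < q) (ht : 0 < t) :
    ∫ τ in (0 : ℝ)..t, τ ^ (p - 1) * (t - τ) ^ (q - 1)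
      = t ^ (p + q - 1) * (Gamma p * Gamma q / Gamma (p + q)) := by
  apply Complex.ofReal_injective
  have hbeta := Complex.betaIntegral_scaled p q ht
  rw [Complex.betaIntegral_eq_Gamma_mul_div _ _ (by simpa) (by simpa)] at hbeta
  rw [← intervalIntegral.integral_ofReal, Complex.ofReal_mul, Complex.ofReal_div,
    Complex.ofReal_mul, ← Complex.Gamma_ofReal, ← Complex.Gamma_ofReal, ← Complex.Gamma_ofReal,
    Complex.ofReal_add, Complex.ofReal_cpow ht.le, Complex.ofReal_sub, Complex.ofReal_add,
    Complex.ofReal_one, ← hbeta]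
  refine intervalIntegral.integral_congr fun τ hτ => ?_
  rw [Set.uIcc_of_le ht.le] at hτ
  rw [Complex.ofReal_mul, Complex.ofReal_cpow hτ.1, Complex.ofReal_cpow (sub_nonneg.mpr hτ.2)]
  push_cast
  rfl

theorem intervalIntegrable_rpow_mul_sub_rpow {p q t : ℝ} (hp : 0 < p) (hq : 0 < q) (ht : 0 < t) :
    IntervalIntegrable (fun τ => τ ^ (p - 1) * (t - τ) ^ (q - 1)) volume 0 t :=
  intervalIntegral.intervalIntegrable_of_integral_ne_zero <| by
    rw [integral_rpow_mul_sub_rpow hp hq ht]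
    positivity

theorem hasSum_prod_add {v : ℕ → ℝ} (hv : Summable fun n : ℕ => ((n : ℝ) + 1) * ‖v n‖) :
    HasSum (fun p : ℕ × ℕ => v (p.1 + p.2)) (∑' n : ℕ, ((n : ℝ) + 1) * v n) := by
  let e := Finset.HasAntidiagonal.sigmaAntidiagonalEquivProd (A := ℕ)
  have hfiber (g : ℕ → ℝ) (n : ℕ) :
      ∑ q : Finset.HasAntidiagonal.antidiagonal n, g ((q : ℕ × ℕ).1 + (q : ℕ × ℕ).2)
        = ((n : ℝ) + 1) * g n := by
    rw [Finset.sum_congr rfl fun q _ => by rw [Finset.HasAntidiagonal.mem_antidiagonal.mp q.2],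
      Finset.sum_const, Finset.card_univ, Fintype.card_coe, Finset.Nat.card_antidiagonal,
      nsmul_eq_mul]
    push_cast; ring
  rw [← e.hasSum_iff]
  have hsum : Summable ((fun p : ℕ × ℕ => v (p.1 + p.2)) ∘ e) := by
    refine Summable.of_norm ((summable_sigma_of_nonneg fun _ => norm_nonneg _).mpr
      ⟨fun n => Summable.of_finite, hv.congr fun n => ?_⟩)
    rw [tsum_fintype]
    exact (hfiber (fun m => ‖v m‖) n).symm
  convert hsum.hasSum using 1
  rw [hsum.tsum_sigma' fun _ => Summable.of_finite]
  exact tsum_congr fun n => by rw [tsum_fintype]; exact (hfiber v n).symm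

noncomputable def mlTerm (a b c : ℝ) (j : ℕ) (s : ℝ) : ℝ :=
  c ^ j / Gamma (j * a + b) * s ^ (j * a + b - 1)

section mlTerm

variable {a b b' c s t : ℝ}

theorem mlTerm_eq_of_pos (hs : 0 < s) (j : ℕ) :
    mlTerm a b c j s = s ^ (b - 1) * ((c * s ^ a) ^ j / Gamma (j * a + b)) := by
  rw [mlTerm, mul_pow, ← rpow_natCast (s ^ a), ← rpow_mul hs.le, add_sub_assoc, rpow_add hs,
    mul_comm a]
  ring

theorem norm_mlTerm (ha : 0 ≤ a) (hb : 0 < b) (hs : 0 ≤ s) (j : ℕ) :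
    ‖mlTerm a b c j s‖ = mlTerm a b |c| j s := by
  have hΓ : 0 < Gamma (j * a + b) := Gamma_pos_of_pos (by positivity)
  rw [mlTerm, mlTerm, Real.norm_eq_abs, abs_mul, abs_div, abs_pow, abs_of_pos hΓ,
    abs_of_nonneg (rpow_nonneg hs _)]

theorem summable_norm_mlTerm (ha : 0 < a) (hs : 0 < s) :
    Summable fun j => ‖mlTerm a b c j s‖ :=
  ((summable_norm_ML_term ha b (c * s ^ a)).mul_left ‖s ^ (b - 1)‖).congr fun j => by
    rw [← norm_mul, mlTerm_eq_of_pos hs]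

theorem hasSum_mlTerm (ha : 0 < a) (hs : 0 < s) :
    HasSum (fun j => mlTerm a b c j s) (s ^ (b - 1) * ML a b (c * s ^ a)) := by
  simp only [mlTerm_eq_of_pos hs]
  exact ((summable_norm_ML_term ha b (c * s ^ a)).of_norm.hasSum).mul_left _

theorem summable_nat_add_one_mul_norm_mlTerm (ha : 0 < a) (hs : 0 < s) :
    Summable fun n : ℕ => ((n : ℝ) + 1) * ‖mlTerm a b c n s‖ :=
  ((summable_norm_ML2_term ha b (c * s ^ a)).mul_left ‖s ^ (b - 1)‖).congr fun n => by
    rw [mlTerm_eq_of_pos hs, norm_mul, mul_div_assoc, norm_mul,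
      Real.norm_of_nonneg (by positivity : (0 : ℝ) ≤ n + 1)]
    ring

theorem hasSum_nat_add_one_mul_mlTerm (ha : 0 < a) (hs : 0 < s) :
    HasSum (fun n : ℕ => ((n : ℝ) + 1) * mlTerm a b c n s)
      (s ^ (b - 1) * ML2 a b (c * s ^ a)) := by
  have h := ((summable_norm_ML2_term ha b (c * s ^ a)).of_norm.hasSum).mul_left (s ^ (b - 1))
  rw [ML2]
  refine h.congr_fun fun n => ?_
  rw [mlTerm_eq_of_pos hs]
  ring

theorem mlTerm_sub_mul_mlTerm (j k : ℕ) :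
    (fun τ => mlTerm a b c j (t - τ) * mlTerm a b' c k τ)
      = fun τ => c ^ j / Gamma (j * a + b) * (c ^ k / Gamma (k * a + b'))
          * (τ ^ (k * a + b' - 1) * (t - τ) ^ (j * a + b - 1)) := by
  ext τ
  simp only [mlTerm]
  ring

theorem intervalIntegrable_mlTerm_sub_mul_mlTerm (ha : 0 ≤ a) (hb : 0 < b) (hb' : 0 < b')
    (ht : 0 < t) (j k : ℕ) :
    IntervalIntegrable (fun τ => mlTerm a b c j (t - τ) * mlTerm a b' c k τ) volume 0 t := by
  rw [mlTerm_sub_mul_mlTerm]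
  exact (intervalIntegrable_rpow_mul_sub_rpow (by positivity) (by positivity) ht).const_mul _

theorem integral_mlTerm_sub_mul_mlTerm (ha : 0 ≤ a) (hb : 0 < b) (hb' : 0 < b')
    (ht : 0 < t) (j k : ℕ) :
    ∫ τ in (0 : ℝ)..t, mlTerm a b c j (t - τ) * mlTerm a b' c k τ
      = mlTerm a (b + b') c (j + k) t := by
  have hsum : (k * a + b') + (j * a + b) = ((j + k : ℕ) : ℝ) * a + (b + b') := by
    push_cast; ring
  rw [mlTerm_sub_mul_mlTerm, intervalIntegral.integral_const_mul,
    integral_rpow_mul_sub_rpow (by positivity) (by positivity) ht, hsum, mlTerm]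
  field_simp
  ring

theorem integral_rpow_mul_ML_conv (ha : 0 < a) (hb : 0 < b) (hb' : 0 < b')
    (c : ℝ) (ht : 0 < t) :
    ∫ τ in (0 : ℝ)..t, (t - τ) ^ (b - 1) * ML a b (c * (t - τ) ^ a)
        * (τ ^ (b' - 1) * ML a b' (c * τ ^ a))
      = t ^ (b + b' - 1) * ML2 a (b + b') (c * t ^ a) := by
  have hterm (c' : ℝ) (p : ℕ × ℕ) :
      ∫ τ in Set.Ioo 0 t, mlTerm a b c' p.1 (t - τ) * mlTerm a b' c' p.2 τ
        = mlTerm a (b + b') c' (p.1 + p.2) t := by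
    rw [← integral_Ioc_eq_integral_Ioo, ← intervalIntegral.integral_of_le ht.le,
      integral_mlTerm_sub_mul_mlTerm ha.le hb hb' ht]
  have hexpand : ∀ τ ∈ Set.Ioo 0 t,
      (t - τ) ^ (b - 1) * ML a b (c * (t - τ) ^ a) * (τ ^ (b' - 1) * ML a b' (c * τ ^ a))
        = ∑' p : ℕ × ℕ, mlTerm a b c p.1 (t - τ) * mlTerm a b' c p.2 τ := fun τ hτ => by
    rw [← (hasSum_mlTerm ha (sub_pos.2 hτ.2)).tsum_eq, ← (hasSum_mlTerm ha hτ.1).tsum_eq,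
      tsum_mul_tsum_of_summable_norm (summable_norm_mlTerm ha (sub_pos.2 hτ.2))
        (summable_norm_mlTerm ha hτ.1)]
  have hint (p : ℕ × ℕ) :
      IntegrableOn (fun τ => mlTerm a b c p.1 (t - τ) * mlTerm a b' c p.2 τ) (Set.Ioo 0 t) :=
    (intervalIntegrable_mlTerm_sub_mul_mlTerm ha.le hb hb' ht p.1 p.2).1.mono_set
      Set.Ioo_subset_Ioc_self
  have hnorm (p : ℕ × ℕ) :
      ∫ τ in Set.Ioo 0 t, ‖mlTerm a b c p.1 (t - τ) * mlTerm a b' c p.2 τ‖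
        = mlTerm a (b + b') |c| (p.1 + p.2) t := by
    rw [← hterm]
    refine setIntegral_congr_fun measurableSet_Ioo fun τ hτ => ?_
    rw [norm_mul, norm_mlTerm ha.le hb (sub_pos.2 hτ.2).le, norm_mlTerm ha.le hb' hτ.1.le]
  have hsummable : Summable fun p : ℕ × ℕ =>
      ∫ τ in Set.Ioo 0 t, ‖mlTerm a b c p.1 (t - τ) * mlTerm a b' c p.2 τ‖ := by
    simp only [hnorm]
    exact (hasSum_prod_add (summable_nat_add_one_mul_norm_mlTerm ha ht)).summable
  rw [intervalIntegral.integral_of_le ht.le, integral_Ioc_eq_integral_Ioo,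
    setIntegral_congr_fun measurableSet_Ioo hexpand,
    ← integral_tsum_of_summable_integral_norm hint hsummable]
  simp only [hterm]
  rw [(hasSum_prod_add (summable_nat_add_one_mul_norm_mlTerm ha ht)).tsum_eq,
    (hasSum_nat_add_one_mul_mlTerm ha ht).tsum_eq]

end mlTerm

theorem integral_Ufun_sub_mul_ufun {a1 a2 C1 C2 t : ℝ} (ha2 : 0 < a2) (ha12 : a2 < a1)
    (ht : 0 < t) :
    ∫ τ in (0 : ℝ)..t, Ufun a1 a2 C1 C2 (t - τ) * ufun a1 a2 C1 C2 τ
      = t ^ (2 * a1) / C1 ^ 2 * ML2 (a1 - a2) (2 * a1 + 1) (-C2 * t ^ (a1 - a2) / C1) := by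
  have hconv := integral_rpow_mul_ML_conv (a := a1 - a2) (b := a1 + 1) (b' := a1)
    (sub_pos.2 ha12) (by linarith) (by linarith) (-C2 / C1) ht
  rw [add_sub_cancel_right, show a1 + 1 + a1 - 1 = 2 * a1 by ring,
    show a1 + 1 + a1 = 2 * a1 + 1 by ring] at hconv
  have harg (s : ℝ) : -C2 * s ^ (a1 - a2) / C1 = -C2 / C1 * s ^ (a1 - a2) := by ring
  simp only [Ufun, ufun, harg]
  rw [div_mul_eq_mul_div, ← hconv, ← intervalIntegral.integral_div]
  refine intervalIntegral.integral_congr fun τ _ => ?_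
  ring

theorem stmt_0_general (a1 a2 C1 C2 : ℝ) (ha2 : 0 < a2) (ha12 : a2 < a1)
    (t : ℝ) (ht : 0 < t) :
    VarY a1 a2 C1 C2 t
      = 2 * t ^ (2 * a1) / C1 ^ 2 * ML2 (a1 - a2) (2 * a1 + 1) (-C2 * t ^ (a1 - a2) / C1)
        - (Ufun a1 a2 C1 C2 t) ^ 2
    ∧ (∫ τ in (0:ℝ)..t, 2 * Ufun a1 a2 C1 C2 (t - τ) * ufun a1 a2 C1 C2 τ)
      = 2 * t ^ (2 * a1) / C1 ^ 2 * ML2 (a1 - a2) (2 * a1 + 1) (-C2 * t ^ (a1 - a2) / C1) := by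
  have hint : (∫ τ in (0:ℝ)..t, 2 * Ufun a1 a2 C1 C2 (t - τ) * ufun a1 a2 C1 C2 τ)
      = 2 * t ^ (2 * a1) / C1 ^ 2 * ML2 (a1 - a2) (2 * a1 + 1) (-C2 * t ^ (a1 - a2) / C1) := by
    simp only [mul_assoc, intervalIntegral.integral_const_mul]
    rw [integral_Ufun_sub_mul_ufun ha2 ha12 ht]
    ring
  refine ⟨?_, hint⟩
  rw [VarY, CovY, min_self, ← hint, sq]
  simp only [← two_mul]

/-- For every `t > 0`, the variance of the inverse mixed stable subordinator satisfies the
exact identity `Var_Y(t) = (2 t^{2α₁}/C₁²) E²_{α₁-α₂, 2α₁+1}(-C₂ t^{α₁-α₂}/C₁) - U(t)²`;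
equivalently, `∫₀^t 2 U(t-τ) u(τ) dτ` equals the first term. -/
theorem stmt_0 (a1 a2 C1 C2 : ℝ) (ha2 : 0 < a2) (ha12 : a2 < a1) (ha1 : a1 < 1)
    (hC1 : 0 < C1) (hC2 : 0 < C2) (hC : C1 + C2 = 1) (t : ℝ) (ht : 0 < t) :
    VarY a1 a2 C1 C2 t
      = 2 * t ^ (2 * a1) / C1 ^ 2 * ML2 (a1 - a2) (2 * a1 + 1) (-C2 * t ^ (a1 - a2) / C1)
        - (Ufun a1 a2 C1 C2 t) ^ 2
    ∧ (∫ τ in (0:ℝ)..t, 2 * Ufun a1 a2 C1 C2 (t - τ) * ufun a1 a2 C1 C2 τ)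
      = 2 * t ^ (2 * a1) / C1 ^ 2 * ML2 (a1 - a2) (2 * a1 + 1) (-C2 * t ^ (a1 - a2) / C1) :=
  stmt_0_general a1 a2 C1 C2 ha2 ha12 t ht
end

section
/- For every 0 < s ≤ t, the integral I(s,t) = ∫₀^s U(t−τ) u(τ) dτ equals the double series (1/C₁²) ∑_{m=0}^∞ ∑_{k=0}^∞ (−C₂/C₁)^{m+k} t^{(m+k)(α₁−α₂)+2α₁} / (Γ(m(α₁−α₂)+α₁+1) Γ(k(α₁−α₂)+α₁)) · B(k(α₁−α₂)+α₁, m(α₁−α₂)+α₁+1; s/t), where B(a,b;x) = ∫₀^x y^{a−1}(1−y)^{b−1} dy is the incomplete Beta function. -/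
open Real MeasureTheory Filter Topology

/-!
Both `U(t - τ)` and `u(τ)` are Mittag-Leffler power series, in `(t - τ)^(α₁-α₂)` and
`τ^(α₁-α₂)`. On `(0, s)` the terms of the series of `U(t - τ)` are bounded by a summable
sequence and those of `u` have summable `L¹` norms, so the integral of the product is the
double series of termwise integrals. The substitution `τ = t y` turns each
`∫₀ˢ (t - τ)^A τ^(B-1) dτ` into `t^(A+B) B(B, A+1; s/t)`. The Mittag-Leffler series converge
by the ratio test, because log-convexity of `Γ` gives `Γ(y) / Γ(y + ρ) → 0` as `y → ∞`.
-/

open Set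

theorem Gamma_add_one_le_Gamma_add_mul_rpow {y ρ : ℝ} (hy : 0 < y) (hρ : 0 < ρ)
    (hρ1 : ρ ≤ 1) :
    Gamma (y + 1) ≤ Gamma (y + ρ) * (y + ρ) ^ (1 - ρ) := by
  rcases hρ1.eq_or_lt with rfl | hρ1
  · simp
  have hyρ : 0 < y + ρ := by linarith
  have hΓ : 0 < Gamma (y + ρ) := Gamma_pos_of_pos hyρ
  calc Gamma (y + 1) = Gamma (ρ * (y + ρ) + (1 - ρ) * (y + ρ + 1)) := by congr 1; ring
    _ ≤ Gamma (y + ρ) ^ ρ * Gamma (y + ρ + 1) ^ (1 - ρ) :=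
      Gamma_mul_add_mul_le_rpow_Gamma_mul_rpow_Gamma hyρ (by linarith) hρ (by linarith)
        (by ring)
    _ = Gamma (y + ρ) * (y + ρ) ^ (1 - ρ) := by
      rw [Gamma_add_one hyρ.ne', mul_rpow hyρ.le hΓ.le, mul_left_comm, ← rpow_add hΓ,
        add_sub_cancel, rpow_one, mul_comm]

theorem tendsto_Gamma_div_Gamma_add_of_le_one {ρ : ℝ} (hρ : 0 < ρ) (hρ1 : ρ ≤ 1) :
    Tendsto (fun y => Gamma y / Gamma (y + ρ)) atTop (𝓝 0) := by
  have hbound : Tendsto (fun y => (1 + ρ / y) * (y + ρ) ^ (-ρ)) atTop (𝓝 0) := by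
    simpa using (tendsto_const_nhds.add (tendsto_const_nhds.div_atTop tendsto_id)).mul
      ((tendsto_rpow_neg_atTop hρ).comp (tendsto_atTop_add_const_right _ ρ tendsto_id))
  refine tendsto_of_tendsto_of_tendsto_of_le_of_le' tendsto_const_nhds hbound ?_ ?_
  all_goals filter_upwards [eventually_gt_atTop 0] with y hy
  · exact div_nonneg (Gamma_pos_of_pos hy).le (Gamma_pos_of_pos (by linarith)).le
  have hyρ : 0 < y + ρ := by linarith
  have key := Gamma_add_one_le_Gamma_add_mul_rpow hy hρ hρ1
  rw [Gamma_add_one hy.ne', sub_eq_add_neg, rpow_add hyρ, rpow_one] at key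
  rw [div_le_iff₀ (Gamma_pos_of_pos hyρ), one_add_div hy.ne']
  calc Gamma y ≤ Gamma (y + ρ) * ((y + ρ) * (y + ρ) ^ (-ρ)) / y := by
        rw [le_div_iff₀ hy]; linarith
    _ = _ := by ring

theorem tendsto_Gamma_div_Gamma_add {ρ : ℝ} (hρ : 0 < ρ) :
    Tendsto (fun y => Gamma y / Gamma (y + ρ)) atTop (𝓝 0) := by
  refine tendsto_of_tendsto_of_tendsto_of_le_of_le' tendsto_const_nhds
    (tendsto_Gamma_div_Gamma_add_of_le_one (lt_min hρ one_pos) (min_le_right ρ 1)) ?_ ?_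
  all_goals filter_upwards [eventually_ge_atTop 2] with y hy
  · exact div_nonneg (Gamma_pos_of_pos (by linarith)).le (Gamma_pos_of_pos (by linarith)).le
  have hmin : 0 < min ρ 1 := lt_min hρ one_pos
  refine div_le_div_of_nonneg_left (Gamma_pos_of_pos (by linarith)).le
    (Gamma_pos_of_pos (by linarith)) (Gamma_strictMonoOn_Ici.monotoneOn ?_ ?_ ?_)
  · exact mem_Ici.2 (by linarith)
  · exact mem_Ici.2 (by linarith)
  · linarith [min_le_left ρ 1]

theorem summable_pow_div_Gamma {ρ : ℝ} (hρ : 0 < ρ) (b x : ℝ) :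
    Summable fun k : ℕ => x ^ k / Gamma (k * ρ + b) := by
  have harg : Tendsto (fun k : ℕ => (k : ℝ) * ρ + b) atTop atTop :=
    tendsto_atTop_add_const_right _ b (tendsto_natCast_atTop_atTop.atTop_mul_const hρ)
  have hratio : Tendsto (fun k : ℕ => |x| * (Gamma (k * ρ + b) / Gamma (k * ρ + b + ρ)))
      atTop (𝓝 0) := by
    simpa using ((tendsto_Gamma_div_Gamma_add hρ).comp harg).const_mul |x|
  refine summable_of_ratio_norm_eventually_le (r := 1 / 2) (by norm_num) ?_
  filter_upwards [harg.eventually_gt_atTop 0,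
    hratio.eventually (ge_mem_nhds (by norm_num : (0 : ℝ) < 1 / 2))] with k hpos hsmall
  have hΓ : 0 < Gamma (k * ρ + b) := Gamma_pos_of_pos hpos
  have hΓ' : 0 < Gamma (k * ρ + b + ρ) := Gamma_pos_of_pos (by linarith)
  rw [show ((k + 1 : ℕ) : ℝ) * ρ + b = k * ρ + b + ρ by push_cast; ring, norm_div, norm_div,
    norm_pow, norm_pow, norm_of_nonneg hΓ.le, norm_of_nonneg hΓ'.le, norm_eq_abs, pow_succ]
  calc |x| ^ k * |x| / Gamma (k * ρ + b + ρ)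
      = |x| * (Gamma (k * ρ + b) / Gamma (k * ρ + b + ρ)) * (|x| ^ k / Gamma (k * ρ + b)) := by
        field_simp
    _ ≤ 1 / 2 * (|x| ^ k / Gamma (k * ρ + b)) := by gcongr

theorem pow_mul_rpow_natCast_mul_add {z : ℝ} (hz : 0 < z) (c ρ e : ℝ) (m : ℕ) :
    c ^ m * z ^ (m * ρ + e) = (c * z ^ ρ) ^ m * z ^ e := by
  rw [rpow_add hz, mul_comm (m : ℝ), rpow_mul hz.le, rpow_natCast, mul_pow]
  ring

theorem summable_pow_mul_rpow_div_Gamma {ρ z : ℝ} (hρ : 0 < ρ) (hz : 0 < z) (c e b : ℝ) :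
    Summable fun m : ℕ => c ^ m * z ^ (m * ρ + e) / Gamma (m * ρ + b) :=
  ((summable_pow_div_Gamma hρ b (c * z ^ ρ)).mul_left (z ^ e)).congr fun m => by
    rw [pow_mul_rpow_natCast_mul_add hz]; ring

theorem rpow_mul_ML_eq_tsum {z : ℝ} (hz : 0 < z) (ρ b c e : ℝ) :
    z ^ e * ML ρ b (c * z ^ ρ) = ∑' m : ℕ, c ^ m * z ^ (m * ρ + e) / Gamma (m * ρ + b) := by
  rw [ML, ← tsum_mul_left]
  congr with m
  rw [pow_mul_rpow_natCast_mul_add hz]; ring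

theorem integral_tsum_mul_tsum {α : Type*} [MeasurableSpace α] {μ : Measure α}
    {f g : ℕ → α → ℝ} {F : ℕ → ℝ} (hf_meas : ∀ m, AEStronglyMeasurable (f m) μ)
    (hf_bound : ∀ m, ∀ᵐ x ∂μ, ‖f m x‖ ≤ F m) (hF : Summable F)
    (hg_int : ∀ k, Integrable (g k) μ) (hg_sum : ∀ᵐ x ∂μ, Summable fun k => g k x)
    (hg_norm : Summable fun k => ∫ x, ‖g k x‖ ∂μ) :
    ∫ x, (∑' m, f m x) * ∑' k, g k x ∂μ = ∑' m, ∑' k, ∫ x, f m x * g k x ∂μ := by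
  have hprod_int : ∀ p : ℕ × ℕ, Integrable (fun x => f p.1 x * g p.2 x) μ := fun p =>
    (hg_int p.2).bdd_mul (hf_meas p.1) (hf_bound p.1)
  have hprod_norm : Summable fun p : ℕ × ℕ => ∫ x, ‖f p.1 x * g p.2 x‖ ∂μ := by
    refine (summable_mul_of_summable_norm hF.norm hg_norm.norm).of_nonneg_of_le
      (fun p => integral_nonneg fun x => norm_nonneg _) fun p => ?_
    rw [← integral_const_mul]
    refine integral_mono_ae (hprod_int p).norm ((hg_int p.2).norm.const_mul _) ?_
    filter_upwards [hf_bound p.1] with x hx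
    rw [norm_mul]
    exact mul_le_mul_of_nonneg_right hx (norm_nonneg _)
  have hprod_sum : Summable fun p : ℕ × ℕ => ∫ x, f p.1 x * g p.2 x ∂μ :=
    hprod_norm.of_norm_bounded fun p => norm_integral_le_integral_norm _
  have hf_sum : ∀ᵐ x ∂μ, Summable fun m => ‖f m x‖ := by
    filter_upwards [ae_all_iff.2 hf_bound] with x hx
    exact hF.of_nonneg_of_le (fun m => norm_nonneg _) hx
  calc ∫ x, (∑' m, f m x) * ∑' k, g k x ∂μ
      = ∫ x, ∑' p : ℕ × ℕ, f p.1 x * g p.2 x ∂μ := by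
        refine integral_congr_ae ?_
        filter_upwards [hf_sum, hg_sum] with x hfx hgx
        exact tsum_mul_tsum_of_summable_norm hfx hgx.norm
    _ = ∑' p : ℕ × ℕ, ∫ x, f p.1 x * g p.2 x ∂μ :=
        (integral_tsum_of_summable_integral_norm hprod_int hprod_norm).symm
    _ = ∑' m, ∑' k, ∫ x, f m x * g k x ∂μ := hprod_sum.tsum_prod

theorem integral_sub_rpow_mul_rpow_eq_Binc {s t A B : ℝ} (hs : 0 ≤ s) (hst : s ≤ t)
    (ht : 0 < t) :
    ∫ τ in (0 : ℝ)..s, (t - τ) ^ A * τ ^ (B - 1) = t ^ (A + B) * Binc B (A + 1) (s / t) := by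
  have hst1 : s / t ≤ 1 := (div_le_one ht).2 hst
  have hsubst := intervalIntegral.integral_comp_mul_left (a := 0) (b := s / t)
    (fun τ => (t - τ) ^ A * τ ^ (B - 1)) ht.ne'
  rw [mul_zero, mul_div_cancel₀ _ ht.ne', eq_inv_smul_iff₀ ht.ne'] at hsubst
  rw [← hsubst, Binc, add_sub_cancel_right, smul_eq_mul, ← intervalIntegral.integral_const_mul,
    ← intervalIntegral.integral_const_mul]
  refine intervalIntegral.integral_congr fun y hy => ?_
  rw [uIcc_of_le (div_nonneg hs ht.le)] at hy
  have h1y : 0 ≤ 1 - y := by linarith [hy.2]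
  rw [show t - t * y = t * (1 - y) by ring, mul_rpow ht.le h1y, mul_rpow ht.le hy.1,
    show A + B = 1 + A + (B - 1) by ring, rpow_add ht, rpow_add ht, rpow_one]
  ring

section DoubleSeries

variable {ρ a c s t : ℝ}

theorem integral_Ioo_sub_rpow_mul_rpow_div_Gamma_eq_Binc (hs : 0 < s) (hst : s ≤ t)
    (m k : ℕ) :
    ∫ τ in Ioo 0 s, c ^ m * (t - τ) ^ (m * ρ + a) / Gamma (m * ρ + a + 1) *
        (c ^ k * τ ^ (k * ρ + a - 1) / Gamma (k * ρ + a))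
      = c ^ (m + k) * t ^ ((m + k) * ρ + 2 * a) / (Gamma (m * ρ + a + 1) * Gamma (k * ρ + a))
          * Binc (k * ρ + a) (m * ρ + a + 1) (s / t) := by
  rw [← integral_Ioc_eq_integral_Ioo, ← intervalIntegral.integral_of_le hs.le]
  calc _ = ∫ τ in (0 : ℝ)..s, c ^ (m + k) / (Gamma (m * ρ + a + 1) * Gamma (k * ρ + a)) *
          ((t - τ) ^ (m * ρ + a) * τ ^ (k * ρ + a - 1)) := by
        congr with τ; ring
    _ = _ := by
        rw [intervalIntegral.integral_const_mul,
          integral_sub_rpow_mul_rpow_eq_Binc hs.le hst (hs.trans_le hst)]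
        ring_nf

theorem integral_Ioo_norm_pow_mul_rpow_div_Gamma (hρ : 0 ≤ ρ) (ha : 0 < a) (hs : 0 < s)
    (k : ℕ) :
    ∫ τ in Ioo 0 s, ‖c ^ k * τ ^ (k * ρ + a - 1) / Gamma (k * ρ + a)‖
      = |c| ^ k * s ^ (k * ρ + a) / Gamma (k * ρ + (a + 1)) := by
  have hB : 0 < k * ρ + a := by positivity
  have hΓ := Gamma_pos_of_pos hB
  calc _ = ∫ τ in Ioo 0 s, |c| ^ k / Gamma (k * ρ + a) * τ ^ (k * ρ + a - 1) := by
        refine setIntegral_congr_fun measurableSet_Ioo fun τ hτ => ?_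
        rw [norm_div, norm_mul, norm_pow, norm_of_nonneg (rpow_nonneg hτ.1.le _),
          norm_of_nonneg hΓ.le, norm_eq_abs]
        ring
    _ = _ := by
        rw [integral_const_mul, ← integral_Ioc_eq_integral_Ioo,
          ← intervalIntegral.integral_of_le hs.le, integral_rpow (Or.inl (by linarith)),
          sub_add_cancel, zero_rpow hB.ne', ← add_assoc, Gamma_add_one hB.ne']
        field_simp
        ring

theorem integral_tsum_mul_tsum_eq_Binc (hρ : 0 < ρ) (ha : 0 < a) (hs : 0 < s) (hst : s ≤ t) :
    ∫ τ in Ioo 0 s, (∑' m : ℕ, c ^ m * (t - τ) ^ (m * ρ + a) / Gamma (m * ρ + a + 1)) *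
        ∑' k : ℕ, c ^ k * τ ^ (k * ρ + a - 1) / Gamma (k * ρ + a)
      = ∑' m : ℕ, ∑' k : ℕ, c ^ (m + k) * t ^ ((m + k) * ρ + 2 * a)
          / (Gamma (m * ρ + a + 1) * Gamma (k * ρ + a))
          * Binc (k * ρ + a) (m * ρ + a + 1) (s / t) := by
  have ht : 0 < t := hs.trans_le hst
  rw [integral_tsum_mul_tsum
    (F := fun m : ℕ => |c| ^ m * t ^ (m * ρ + a) / Gamma (m * ρ + a + 1))]
  · simp only [integral_Ioo_sub_rpow_mul_rpow_div_Gamma_eq_Binc hs hst]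
  · intro m
    exact (by fun_prop : Measurable _).aestronglyMeasurable
  · intro m
    refine ae_restrict_of_forall_mem measurableSet_Ioo fun τ hτ => ?_
    have hΓ := Gamma_pos_of_pos (by positivity : (0 : ℝ) < m * ρ + a + 1)
    rw [norm_div, norm_mul, norm_pow, norm_of_nonneg (rpow_nonneg (by linarith [hτ.2]) _),
      norm_of_nonneg hΓ.le, norm_eq_abs]
    gcongr
    · linarith [hτ.2]
    · linarith [hτ.1]
  · simpa only [add_assoc] using summable_pow_mul_rpow_div_Gamma hρ ht |c| a (a + 1)
  · intro k
    refine (((intervalIntegral.integrableOn_Ioo_rpow_iff hs).2 ?_).const_mul _).div_const _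
    nlinarith [(k.cast_nonneg : (0 : ℝ) ≤ k)]
  · refine ae_restrict_of_forall_mem measurableSet_Ioo fun τ hτ => ?_
    simpa only [add_sub_assoc] using summable_pow_mul_rpow_div_Gamma hρ hτ.1 c (a - 1) a
  · simp only [integral_Ioo_norm_pow_mul_rpow_div_Gamma hρ.le ha hs]
    exact summable_pow_mul_rpow_div_Gamma hρ hs |c| a (a + 1)

end DoubleSeries

theorem Ufun_eq_tsum (a1 a2 C1 C2 : ℝ) {z : ℝ} (hz : 0 < z) :
    Ufun a1 a2 C1 C2 z = (∑' m : ℕ, (-C2 / C1) ^ m * z ^ (m * (a1 - a2) + a1)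
      / Gamma (m * (a1 - a2) + a1 + 1)) / C1 := by
  rw [Ufun, show -C2 * z ^ (a1 - a2) / C1 = -C2 / C1 * z ^ (a1 - a2) by ring,
    div_mul_eq_mul_div, rpow_mul_ML_eq_tsum hz]
  simp only [add_assoc]

theorem ufun_eq_tsum (a1 a2 C1 C2 : ℝ) {z : ℝ} (hz : 0 < z) :
    ufun a1 a2 C1 C2 z = (∑' k : ℕ, (-C2 / C1) ^ k * z ^ (k * (a1 - a2) + a1 - 1)
      / Gamma (k * (a1 - a2) + a1)) / C1 := by
  rw [ufun, show -C2 * z ^ (a1 - a2) / C1 = -C2 / C1 * z ^ (a1 - a2) by ring,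
    div_mul_eq_mul_div, rpow_mul_ML_eq_tsum hz]
  simp only [add_sub_assoc]

theorem stmt_2_general (a1 a2 C1 C2 : ℝ) (ha2 : 0 < a2) (ha12 : a2 < a1)
    (s t : ℝ) (hs : 0 < s) (hst : s ≤ t) :
    Ifun a1 a2 C1 C2 s t
      = 1 / C1 ^ 2 *
          ∑' m : ℕ, ∑' k : ℕ,
            (-C2 / C1) ^ (m + k) * t ^ (((m : ℝ) + (k : ℝ)) * (a1 - a2) + 2 * a1)
              / (Real.Gamma ((m : ℝ) * (a1 - a2) + a1 + 1)
                  * Real.Gamma ((k : ℝ) * (a1 - a2) + a1))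
              * Binc ((k : ℝ) * (a1 - a2) + a1) ((m : ℝ) * (a1 - a2) + a1 + 1) (s / t) := by
  rw [Ifun, intervalIntegral.integral_of_le hs.le, integral_Ioc_eq_integral_Ioo,
    ← integral_tsum_mul_tsum_eq_Binc (sub_pos.2 ha12) (ha2.trans ha12) hs hst,
    ← integral_const_mul]
  refine setIntegral_congr_fun measurableSet_Ioo fun τ hτ => ?_
  rw [Ufun_eq_tsum _ _ _ _ (by linarith [hτ.2] : 0 < t - τ), ufun_eq_tsum _ _ _ _ hτ.1]
  ring

/-- For `0 < s ≤ t`, the integral `I(s,t)` equals the stated double series involving the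
incomplete Beta function. -/
theorem stmt_2 (a1 a2 C1 C2 : ℝ) (ha2 : 0 < a2) (ha12 : a2 < a1) (ha1 : a1 < 1)
    (hC1 : 0 < C1) (hC2 : 0 < C2) (hC : C1 + C2 = 1) (s t : ℝ) (hs : 0 < s) (hst : s ≤ t) :
    Ifun a1 a2 C1 C2 s t
      = 1 / C1 ^ 2 *
          ∑' m : ℕ, ∑' k : ℕ,
            (-C2 / C1) ^ (m + k) * t ^ (((m : ℝ) + (k : ℝ)) * (a1 - a2) + 2 * a1)
              / (Real.Gamma ((m : ℝ) * (a1 - a2) + a1 + 1)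
                  * Real.Gamma ((k : ℝ) * (a1 - a2) + a1))
              * Binc ((k : ℝ) * (a1 - a2) + a1) ((m : ℝ) * (a1 - a2) + a1 + 1) (s / t) :=
  stmt_2_general a1 a2 C1 C2 ha2 ha12 s t hs hst
end
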